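/- arXiv:2305.17447 — 2 statements merged into one kernel-verified Lean document; each statement's English description precedes it below -/
import Mathlib

section
/- Let f : ℝ³ → [0,∞) be measurable with n = ∫_{ℝ³} f dv > 0 and ∫_{ℝ³} (1+f) log(1+f) dv ≤ C₀ < ∞. Then for every u ∈ ℝ³ and λ > 0, ∫_{{|v−u| ≤ λ}} f dv ≤ μ C₀ + (4π/3) μ e^{1/μ} λ³ for every μ > 0. -/
/-! The Fenchel–Young inequality `x · 1 ≤ Φ(x) + Φ*(1)` for the convex pair
`Φ(x) = μ (1+x) log(1+x) − μx`, `Φ*(y) = μ e^{y/μ} − y − μ` bounds `x ≥ 0` pointwise by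
`μ (1+x) log(1+x) + μ e^{1/μ}`. Integrating this over the ball, the entropy term contributes at
most `μ C₀` and the constant term `μ e^{1/μ}` times the volume `4πλ³/3` of the ball. -/

open MeasureTheory Real

theorem mul_le_mul_log_sub_add_exp {a : ℝ} (ha : 0 < a) (b : ℝ) :
    a * b ≤ a * log a - a + exp b := by
  have h := log_le_sub_one_of_pos (div_pos (exp_pos b) ha)
  rw [log_div (exp_pos b).ne' ha.ne', log_exp] at h
  have h' := mul_le_mul_of_nonneg_left h ha.le
  rw [mul_sub, mul_sub, mul_div_cancel₀ _ ha.ne'] at h'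
  linarith

theorem le_mul_entropy_add_mul_exp_inv {x : ℝ} (hx : -1 < x) {μ : ℝ} (hμ : 0 < μ) :
    x ≤ μ * ((1 + x) * log (1 + x)) + μ * exp (1 / μ) := by
  have young := mul_le_mul_log_sub_add_exp (a := 1 + x) (by linarith) (1 / μ)
  have scaled := mul_le_mul_of_nonneg_left young hμ.le
  rw [mul_one_div, mul_div_cancel₀ _ hμ.ne'] at scaled
  nlinarith

theorem setIntegral_le_mul_integral_entropy_add {α : Type*} [MeasurableSpace α] {ν : Measure α}
    {f : α → ℝ} {s : Set α} (hνs : ν s ≠ ⊤) (hf : IntegrableOn f s ν) (hf0 : ∀ x, 0 ≤ f x)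
    (hent : Integrable (fun x => (1 + f x) * log (1 + f x)) ν) {μ : ℝ} (hμ : 0 < μ) :
    ∫ x in s, f x ∂ν ≤
      μ * (∫ x, (1 + f x) * log (1 + f x) ∂ν) + μ * exp (1 / μ) * ν.real s := by
  have hconst : IntegrableOn (fun _ => μ * exp (1 / μ)) s ν := integrableOn_const hνs
  have hent_nonneg : ∀ x, 0 ≤ (1 + f x) * log (1 + f x) := fun x =>
    mul_nonneg (by linarith [hf0 x]) (log_nonneg (by linarith [hf0 x]))
  calc ∫ x in s, f x ∂ν
      ≤ ∫ x in s, (μ * ((1 + f x) * log (1 + f x)) + μ * exp (1 / μ)) ∂ν :=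
        setIntegral_mono hf ((hent.const_mul μ).integrableOn.add hconst) fun x =>
          le_mul_entropy_add_mul_exp_inv (by linarith [hf0 x]) hμ
    _ = μ * (∫ x in s, (1 + f x) * log (1 + f x) ∂ν) + μ * exp (1 / μ) * ν.real s := by
        rw [integral_add (hent.const_mul μ).integrableOn hconst, integral_const_mul,
          setIntegral_const, smul_eq_mul, mul_comm (ν.real s)]
    _ ≤ μ * (∫ x, (1 + f x) * log (1 + f x) ∂ν) + μ * exp (1 / μ) * ν.real s := by
        have := setIntegral_le_integral (s := s) hent (.of_forall hent_nonneg)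
        gcongr

theorem EuclideanSpace.volume_real_closedBall_fin_three (x : EuclideanSpace ℝ (Fin 3)) {r : ℝ}
    (hr : 0 ≤ r) : volume.real (Metric.closedBall x r) = 4 * π / 3 * r ^ 3 := by
  rw [Measure.real, EuclideanSpace.volume_closedBall_fin_three, ENNReal.toReal_mul,
    ENNReal.toReal_pow, ENNReal.toReal_ofReal hr, ENNReal.toReal_ofReal (by positivity)]
  ring

theorem stmt_10_general (f : EuclideanSpace ℝ (Fin 3) → ℝ) (C₀ : ℝ)
    (hfnonneg : ∀ v, 0 ≤ f v)
    (hfint : Integrable f)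
    (hent_int : Integrable (fun v => (1 + f v) * Real.log (1 + f v)))
    (hent : ∫ v, (1 + f v) * Real.log (1 + f v) ≤ C₀)
    (u : EuclideanSpace ℝ (Fin 3)) (lam : ℝ) (hlam : 0 < lam)
    (μ : ℝ) (hμ : 0 < μ) :
    ∫ v in {v : EuclideanSpace ℝ (Fin 3) | ‖v - u‖ ≤ lam}, f v
      ≤ μ * C₀ + (4 * Real.pi / 3) * μ * Real.exp (1 / μ) * lam ^ 3 := by
  have hball : {v : EuclideanSpace ℝ (Fin 3) | ‖v - u‖ ≤ lam} = Metric.closedBall u lam := by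
    ext v
    simp [dist_eq_norm]
  rw [hball]
  calc ∫ v in Metric.closedBall u lam, f v
      ≤ μ * (∫ v, (1 + f v) * log (1 + f v)) +
        μ * exp (1 / μ) * volume.real (Metric.closedBall u lam) :=
        setIntegral_le_mul_integral_entropy_add measure_closedBall_lt_top.ne hfint.integrableOn
          hfnonneg hent_int hμ
    _ ≤ μ * C₀ + μ * exp (1 / μ) * (4 * π / 3 * lam ^ 3) := by
        rw [EuclideanSpace.volume_real_closedBall_fin_three u hlam.le]
        gcongr
    _ = μ * C₀ + (4 * π / 3) * μ * exp (1 / μ) * lam ^ 3 := by ring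

/-- Entropy bound on the mass in a ball:
`∫_{|v−u|≤λ} f dv ≤ μ C₀ + (4π/3) μ e^{1/μ} λ³` for every `μ > 0`. -/
theorem stmt_10 (f : EuclideanSpace ℝ (Fin 3) → ℝ) (C₀ : ℝ)
    (hfmeas : Measurable f) (hfnonneg : ∀ v, 0 ≤ f v)
    (hfint : Integrable f) (hn : 0 < ∫ v, f v)
    (hent_int : Integrable (fun v => (1 + f v) * Real.log (1 + f v)))
    (hent : ∫ v, (1 + f v) * Real.log (1 + f v) ≤ C₀)
    (u : EuclideanSpace ℝ (Fin 3)) (lam : ℝ) (hlam : 0 < lam)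
    (μ : ℝ) (hμ : 0 < μ) :
    ∫ v in {v : EuclideanSpace ℝ (Fin 3) | ‖v - u‖ ≤ lam}, f v
      ≤ μ * C₀ + (4 * Real.pi / 3) * μ * Real.exp (1 / μ) * lam ^ 3 :=
  stmt_10_general f C₀ hfnonneg hfint hent_int hent u lam hlam μ hμ
end

section
/- Let f : ℝ³ → [0,∞) satisfy ∫_{ℝ³} f dv = n > 0, ∫_{ℝ³} (1+f)log(1+f) dv ≤ C₀, and ∫_{ℝ³} f(v)|v−u|² dv < ∞ for some u ∈ ℝ³. Then there exists a constant c > 0 depending only on n and C₀ (and not on f or u) such that ∫_{ℝ³} f(v)|v−u|² dv ≥ c. -/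
/-!
Split `ℝ³` at the closed ball of radius `r` around `u`. Outside it `|v - u|² ≥ r²`, so the second
moment is at least `r²` times the mass outside the ball. Inside it, the pointwise bound
`t ≤ m (1 + t) log (1 + t) + e^{1/m}` caps the mass by `m C₀ + |B_r| e^{1/m}`. Taking `m` small
and then `r` small makes this at most `n / 2`, which leaves second moment `≥ r² n / 2`.
-/

open MeasureTheory Metric Filter Topology Real

theorem le_mul_mul_log_add_exp_inv {t m : ℝ} (ht : 0 ≤ t) (hm : 0 < m) :
    t ≤ m * ((1 + t) * log (1 + t)) + exp (1 / m) := by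
  rcases le_or_gt t (exp (1 / m)) with h | h
  · have : 0 ≤ (1 + t) * log (1 + t) := mul_nonneg (by linarith) (log_nonneg (by linarith))
    nlinarith
  · have hlog : 1 / m ≤ log (1 + t) := by
      rw [le_log_iff_exp_le (by positivity)]
      linarith
    calc t ≤ m * ((1 + t) * (1 / m)) := by field_simp; linarith
      _ ≤ m * ((1 + t) * log (1 + t)) := by gcongr
      _ ≤ _ := by linarith [exp_pos (1 / m)]

section EntropyBound

variable {α : Type*} [MeasurableSpace α] {μ : Measure α} {f : α → ℝ}

theorem setIntegral_le_of_integral_mul_log_le {s : Set α} {m C : ℝ} (hf0 : ∀ x, 0 ≤ f x)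
    (hgi : Integrable (fun x => (1 + f x) * log (1 + f x)) μ)
    (hgC : ∫ x, (1 + f x) * log (1 + f x) ∂μ ≤ C) (hm : 0 < m) (hs : μ s ≠ ⊤) :
    ∫ x in s, f x ∂μ ≤ m * C + μ.real s * exp (1 / m) := by
  have hg0 : ∀ x, 0 ≤ (1 + f x) * log (1 + f x) := fun x =>
    mul_nonneg (by linarith [hf0 x]) (log_nonneg (by linarith [hf0 x]))
  have hKi : IntegrableOn (fun _ => exp (1 / m)) s μ := integrableOn_const hs
  calc ∫ x in s, f x ∂μ ≤ ∫ x in s, (m * ((1 + f x) * log (1 + f x)) + exp (1 / m)) ∂μ :=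
        integral_mono_of_nonneg (ae_of_all _ hf0) ((hgi.const_mul m).integrableOn.add hKi)
          (ae_of_all _ fun x => le_mul_mul_log_add_exp_inv (hf0 x) hm)
    _ = m * ∫ x in s, (1 + f x) * log (1 + f x) ∂μ + μ.real s * exp (1 / m) := by
        rw [integral_add (hgi.const_mul m).integrableOn hKi, integral_const_mul, setIntegral_const,
          smul_eq_mul]
    _ ≤ m * C + μ.real s * exp (1 / m) := by
        gcongr
        exact (setIntegral_le_integral hgi (ae_of_all _ hg0)).trans hgC

end EntropyBound

section SecondMoment

variable {E : Type*} [NormedAddCommGroup E] [MeasurableSpace E] [OpensMeasurableSpace E]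
  {μ : Measure E} {f : E → ℝ} {u : E} {r : ℝ}

theorem sq_mul_setIntegral_compl_closedBall_le (hf0 : ∀ v, 0 ≤ f v)
    (hf2i : Integrable (fun v => f v * ‖v - u‖ ^ 2) μ) (hr : 0 ≤ r) :
    r ^ 2 * ∫ v in (closedBall u r)ᶜ, f v ∂μ ≤ ∫ v, f v * ‖v - u‖ ^ 2 ∂μ := by
  rw [← integral_const_mul]
  calc ∫ v in (closedBall u r)ᶜ, r ^ 2 * f v ∂μ
        ≤ ∫ v in (closedBall u r)ᶜ, f v * ‖v - u‖ ^ 2 ∂μ := by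
          refine integral_mono_of_nonneg (ae_of_all _ fun v => by positivity [hf0 v])
            hf2i.integrableOn (ae_restrict_of_forall_mem measurableSet_closedBall.compl ?_)
          intro v hv
          have hfar : r ≤ ‖v - u‖ := by
            simp only [Set.mem_compl_iff, mem_closedBall, dist_eq_norm, not_le] at hv
            exact hv.le
          show r ^ 2 * f v ≤ f v * ‖v - u‖ ^ 2
          rw [mul_comm]
          gcongr
          exact hf0 v
    _ ≤ ∫ v, f v * ‖v - u‖ ^ 2 ∂μ :=
        setIntegral_le_integral hf2i (ae_of_all _ fun v => by positivity [hf0 v])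

theorem sq_mul_sub_le_integral_mul_norm_sub_sq {m C : ℝ} (hf0 : ∀ v, 0 ≤ f v)
    (hfi : Integrable f μ) (hgi : Integrable (fun v => (1 + f v) * log (1 + f v)) μ)
    (hgC : ∫ v, (1 + f v) * log (1 + f v) ∂μ ≤ C)
    (hf2i : Integrable (fun v => f v * ‖v - u‖ ^ 2) μ) (hm : 0 < m) (hr : 0 ≤ r)
    (hball : μ (closedBall u r) ≠ ⊤) :
    r ^ 2 * (∫ v, f v ∂μ - m * C - μ.real (closedBall u r) * exp (1 / m)) ≤
      ∫ v, f v * ‖v - u‖ ^ 2 ∂μ := by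
  have hsplit := integral_add_compl (measurableSet_closedBall (x := u) (ε := r)) hfi
  have hinside := setIntegral_le_of_integral_mul_log_le hf0 hgi hgC hm hball
  calc r ^ 2 * (∫ v, f v ∂μ - m * C - μ.real (closedBall u r) * exp (1 / m))
      ≤ r ^ 2 * ∫ v in (closedBall u r)ᶜ, f v ∂μ := by gcongr; linarith
    _ ≤ _ := sq_mul_setIntegral_compl_closedBall_le hf0 hf2i hr

end SecondMoment

/-- Uniform positive lower bound on the (unnormalized) temperature:
there is `c > 0` depending only on `n` and `C₀` such that for every `f` with
mass `n`, entropy bounded by `C₀`, and finite second moment about any `u`,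
`∫ f |v−u|² dv ≥ c`. -/
theorem stmt_11 (n C₀ : ℝ) (hn : 0 < n) :
    ∃ c : ℝ, 0 < c ∧
      ∀ (f : EuclideanSpace ℝ (Fin 3) → ℝ) (u : EuclideanSpace ℝ (Fin 3)),
        Measurable f → (∀ v, 0 ≤ f v) → Integrable f → (∫ v, f v) = n →
        Integrable (fun v => (1 + f v) * Real.log (1 + f v)) →
        (∫ v, (1 + f v) * Real.log (1 + f v)) ≤ C₀ →
        Integrable (fun v => f v * ‖v - u‖ ^ 2) →
        c ≤ ∫ v, f v * ‖v - u‖ ^ 2 := by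
  obtain ⟨m, hm, hmC⟩ := exists_pos_mul_lt (by positivity : 0 < n / 4) C₀
  set V := volume.real (closedBall (0 : EuclideanSpace ℝ (Fin 3)) 1)
  have hsmall : Tendsto (fun r : ℝ => r ^ 3 * (V * exp (1 / m))) (𝓝[>] 0) (𝓝 0) :=
    (((continuous_pow 3).mul continuous_const).tendsto' 0 0 (by simp)).mono_left
      nhdsWithin_le_nhds
  obtain ⟨r, hrV, hr⟩ :=
    ((hsmall.eventually (gt_mem_nhds (by positivity : 0 < n / 4))).and
      self_mem_nhdsWithin).exists
  refine ⟨r ^ 2 * (n / 2), by positivity, fun f u _ hf0 hfi hfn hgi hgC hf2i => ?_⟩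
  have hvol : volume.real (closedBall u r) = r ^ 3 * V := by
    rw [Measure.addHaar_real_closedBall' _ _ (le_of_lt hr), finrank_euclideanSpace_fin]
  have key := sq_mul_sub_le_integral_mul_norm_sub_sq hf0 hfi hgi hgC hf2i hm (le_of_lt hr)
    measure_closedBall_lt_top.ne
  rw [hfn, hvol, mul_assoc] at key
  refine le_trans ?_ key
  gcongr
  linarith [mul_comm C₀ m]
end
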